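/- Let Ω have finite measure, let u_k ⇀ u* weakly in L²(Ω), and let χ_k → χ strongly in L¹(Ω) where each χ_k and χ are characteristic functions, with (1 - χ_k)·u_k = 0 a.e. for all k. Then (1 - χ)·u* = 0 a.e. on Ω; in particular ‖u*‖₀ ≤ ‖χ‖_{L¹(Ω)}. -/

import Mathlib

open Filter Topology MeasureTheory Set

/-!
Write `χ_k` and `χ` as indicators of measurable sets `S_k` and `T`; then `L¹` convergence gives
`μ (S_k \ T) → 0`. A weakly convergent sequence is bounded (Banach–Steinhaus), and since `u_k`
vanishes off `S_k`, testing against `φ = 1_{Tᶜ} u*` gives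
`|∫ u_k φ| = |∫ u_k 1_{S_k \ T} u*| ≤ C ‖1_{S_k \ T} u*‖₂ → 0`.
Hence `∫_{Tᶜ} u*² = ∫ u* φ = 0`, so `u* = 0` a.e. off `T` and `μ {u* ≠ 0} ≤ μ T = ∫ χ`.
-/

theorem exists_norm_le_of_bddAbove_abs_inner {ι E : Type*} [NormedAddCommGroup E]
    [InnerProductSpace ℝ E] [CompleteSpace E] {U : ι → E}
    (h : ∀ f, BddAbove (range fun i => |inner ℝ (U i) f|)) : ∃ C, ∀ i, ‖U i‖ ≤ C := by
  obtain ⟨C, hC⟩ := banach_steinhaus (g := fun i => innerSL ℝ (U i)) fun f => by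
    obtain ⟨C, hC⟩ := h f
    exact ⟨C, fun i => hC (mem_range_self i)⟩
  exact ⟨C, fun i => by simpa only [innerSL_apply_norm] using hC i⟩

namespace MeasureTheory

variable {X : Type*} [MeasurableSpace X] {μ : Measure X}

theorem MemLp.inner_toLp_eq_integral_mul {f g : X → ℝ} (hf : MemLp f 2 μ) (hg : MemLp g 2 μ) :
    inner ℝ (hf.toLp f) (hg.toLp g) = ∫ x, f x * g x ∂μ := by
  rw [L2.inner_def]
  refine integral_congr_ae ?_
  filter_upwards [hf.coeFn_toLp, hg.coeFn_toLp] with x hfx hgx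
  simp [hfx, hgx, mul_comm]

theorem exists_abs_integral_mul_le_of_bddAbove {ι : Type*} {u : ι → X → ℝ}
    (hu : ∀ i, MemLp (u i) 2 μ)
    (h : ∀ φ, MemLp φ 2 μ → BddAbove (range fun i => |∫ x, u i x * φ x ∂μ|)) :
    ∃ C, ∀ i φ, MemLp φ 2 μ → |∫ x, u i x * φ x ∂μ| ≤ C * (eLpNorm φ 2 μ).toReal := by
  obtain ⟨C, hC⟩ := exists_norm_le_of_bddAbove_abs_inner (U := fun i => (hu i).toLp (u i))
    fun f => by
      simpa only [← (hu _).inner_toLp_eq_integral_mul (Lp.memLp f), Lp.toLp_coeFn] using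
        h f (Lp.memLp f)
  refine ⟨C, fun i φ hφ => ?_⟩
  calc |∫ x, u i x * φ x ∂μ| = |inner ℝ ((hu i).toLp (u i)) (hφ.toLp φ)| := by
        rw [MemLp.inner_toLp_eq_integral_mul]
    _ ≤ ‖(hu i).toLp (u i)‖ * ‖hφ.toLp φ‖ := abs_real_inner_le_norm _ _
    _ ≤ C * ‖hφ.toLp φ‖ := mul_le_mul_of_nonneg_right (hC i) (norm_nonneg _)
    _ = C * (eLpNorm φ 2 μ).toReal := by rw [Lp.norm_toLp]

theorem tendsto_eLpNorm_indicator_of_tendsto_measure {ι E : Type*} [NormedAddCommGroup E]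
    {p : ENNReal} {f : X → E} {l : Filter ι} {s : ι → Set X}
    (hp_one : 1 ≤ p) (hp_top : p ≠ ⊤) (hf : MemLp f p μ) (hs : ∀ i, MeasurableSet (s i))
    (hμs : Tendsto (fun i => μ (s i)) l (𝓝 0)) :
    Tendsto (fun i => eLpNorm ((s i).indicator f) p μ) l (𝓝 0) := by
  refine ENNReal.tendsto_nhds_zero.2 fun ε hε => ?_
  rcases eq_or_ne ε ⊤ with rfl | hε_top
  · exact Eventually.of_forall fun _ => le_top
  obtain ⟨δ, hδ, hδε⟩ := hf.eLpNorm_indicator_le hp_one hp_top (ENNReal.toReal_pos hε.ne' hε_top)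
  filter_upwards [ENNReal.tendsto_nhds_zero.1 hμs _ (ENNReal.ofReal_pos.2 hδ)] with i hi
  simpa [ENNReal.ofReal_toReal hε_top] using hδε (s i) (hs i) hi

theorem MemLp.ae_eq_zero_of_integral_mul_indicator_self_eq_zero {f : X → ℝ} {s : Set X}
    (hf : MemLp f 2 μ) (hs : MeasurableSet s) (h : ∫ x, f x * s.indicator f x ∂μ = 0) :
    ∀ᵐ x ∂μ, x ∈ s → f x = 0 := by
  have hsq : ∫ x in s, f x ^ 2 ∂μ = 0 := by
    rw [← integral_indicator hs, ← h]
    congr 1 with x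
    by_cases hx : x ∈ s <;> simp [hx, sq]
  have := (setIntegral_eq_zero_iff_of_nonneg_ae (Eventually.of_forall fun x => sq_nonneg (f x))
    hf.integrable_sq.integrableOn).1 hsq
  rw [EventuallyEq, ae_restrict_iff' hs] at this
  filter_upwards [this] with x hx hxs
  simpa using hx hxs

theorem ae_eq_zero_of_notMem_of_weak_tendsto {u : ℕ → X → ℝ} {ustar : X → ℝ}
    {S : ℕ → Set X} {T : Set X} (hS : ∀ k, MeasurableSet (S k)) (hT : MeasurableSet T)
    (hu : ∀ k, MemLp (u k) 2 μ) (hustar : MemLp ustar 2 μ)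
    (hweak : ∀ φ : X → ℝ, MemLp φ 2 μ →
      Tendsto (fun k => ∫ x, u k x * φ x ∂μ) atTop (𝓝 (∫ x, ustar x * φ x ∂μ)))
    (hST : Tendsto (fun k => μ (S k \ T)) atTop (𝓝 0))
    (hsupp : ∀ k, ∀ᵐ x ∂μ, x ∉ S k → u k x = 0) :
    ∀ᵐ x ∂μ, x ∉ T → ustar x = 0 := by
  obtain ⟨C, hC⟩ := exists_abs_integral_mul_le_of_bddAbove hu fun φ hφ =>
    (hweak φ hφ).abs.bddAbove_range
  set φ := Tᶜ.indicator ustar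
  have hφ : MemLp φ 2 μ := hustar.indicator hT.compl
  have hφ_eq : ∀ k, ∫ x, u k x * φ x ∂μ = ∫ x, u k x * (S k \ T).indicator ustar x ∂μ := by
    intro k
    refine integral_congr_ae ?_
    filter_upwards [hsupp k] with x hx
    by_cases hxS : x ∈ S k <;> by_cases hxT : x ∈ T <;> simp [φ, hxS, hxT, hx]
  have hnorm : Tendsto (fun k => C * (eLpNorm ((S k \ T).indicator ustar) 2 μ).toReal)
      atTop (𝓝 0) := by
    simpa using ((ENNReal.tendsto_toReal ENNReal.zero_ne_top).comp
      (tendsto_eLpNorm_indicator_of_tendsto_measure one_le_two ENNReal.ofNat_ne_top hustar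
        (fun k => (hS k).diff hT) hST)).const_mul C
  have hlim : Tendsto (fun k => ∫ x, u k x * φ x ∂μ) atTop (𝓝 0) :=
    squeeze_zero_norm (fun k => by
      simpa only [hφ_eq, Real.norm_eq_abs] using hC k _ (hustar.indicator ((hS k).diff hT)))
      hnorm
  have hzero : ∫ x, ustar x * φ x ∂μ = 0 := tendsto_nhds_unique (hweak φ hφ) hlim
  simpa using hustar.ae_eq_zero_of_integral_mul_indicator_self_eq_zero hT.compl hzero

theorem AEMeasurable.exists_measurableSet_ae_eq_indicator_one {f : X → ℝ}
    (hf : AEMeasurable f μ) (h01 : ∀ᵐ x ∂μ, f x = 0 ∨ f x = 1) :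
    ∃ s, MeasurableSet s ∧ f =ᵐ[μ] s.indicator 1 := by
  refine ⟨hf.mk f ⁻¹' {1}, hf.measurable_mk (measurableSet_singleton 1), ?_⟩
  filter_upwards [hf.ae_eq_mk, h01] with x hx hx01
  rcases hx01 with h | h <;> simp [← hx, h]

theorem integral_abs_indicator_one_sub_indicator_one {s t : Set X}
    (hs : MeasurableSet s) (ht : MeasurableSet t) :
    ∫ x, |s.indicator (1 : X → ℝ) x - t.indicator 1 x| ∂μ = μ.real (symmDiff s t) := by
  rw [← integral_indicator_one (hs.symmDiff ht)]
  congr 1 with x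
  by_cases hxs : x ∈ s <;> by_cases hxt : x ∈ t <;> simp [mem_symmDiff, hxs, hxt]

end MeasureTheory

theorem weak_limit_support {X : Type*} [MeasurableSpace X]
    (μ : Measure X) [IsFiniteMeasure μ]
    (u : ℕ → X → ℝ) (ustar : X → ℝ) (χk : ℕ → X → ℝ) (χ : X → ℝ)
    (hu : ∀ k, MemLp (u k) 2 μ) (hustar : MemLp ustar 2 μ)
    (hweak : ∀ φ : X → ℝ, MemLp φ 2 μ →
      Tendsto (fun k => ∫ x, u k x * φ x ∂μ) atTop (𝓝 (∫ x, ustar x * φ x ∂μ)))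
    (hχk : ∀ k, AEMeasurable (χk k) μ)
    (hχkval : ∀ k, ∀ᵐ x ∂μ, χk k x = 0 ∨ χk k x = 1)
    (hχ : AEMeasurable χ μ) (hχval : ∀ᵐ x ∂μ, χ x = 0 ∨ χ x = 1)
    (hL1 : Tendsto (fun k => ∫ x, |χk k x - χ x| ∂μ) atTop (𝓝 0))
    (hsupp : ∀ k, ∀ᵐ x ∂μ, (1 - χk k x) * u k x = 0) :
    (∀ᵐ x ∂μ, (1 - χ x) * ustar x = 0) ∧
      (μ {x | ustar x ≠ 0}).toReal ≤ ∫ x, χ x ∂μ := by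
  choose S hS hχkS using fun k => (hχk k).exists_measurableSet_ae_eq_indicator_one (hχkval k)
  obtain ⟨T, hT, hχT⟩ := hχ.exists_measurableSet_ae_eq_indicator_one hχval
  have hsymm : Tendsto (fun k => μ.real (symmDiff (S k) T)) atTop (𝓝 0) := by
    refine hL1.congr fun k => ?_
    rw [← integral_abs_indicator_one_sub_indicator_one (hS k) hT]
    refine integral_congr_ae ?_
    filter_upwards [hχkS k, hχT] with x hxk hx
    rw [hxk, hx]
  have hST : Tendsto (fun k => μ (S k \ T)) atTop (𝓝 0) := by
    refine tendsto_of_tendsto_of_tendsto_of_le_of_le tendsto_const_nhds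
      ((ENNReal.tendsto_toReal_iff (fun k => measure_ne_top _ _) ENNReal.zero_ne_top).1 hsymm)
      (fun _ => zero_le) fun _ => measure_mono subset_union_left
  have hsuppS : ∀ k, ∀ᵐ x ∂μ, x ∉ S k → u k x = 0 := fun k => by
    filter_upwards [hsupp k, hχkS k] with x hx hxk hxS
    simpa [hxk, hxS] using hx
  have hvanish := ae_eq_zero_of_notMem_of_weak_tendsto hS hT hu hustar hweak hST hsuppS
  have hsupport : {x | ustar x ≠ 0} ≤ᵐ[μ] T := by
    filter_upwards [hvanish] with x hx hne
    by_contra hxT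
    exact hne (hx hxT)
  refine ⟨?_, ?_⟩
  · filter_upwards [hvanish, hχT] with x hx hxT
    by_cases hxT' : x ∈ T <;> simp [hxT, hxT', hx]
  · calc (μ {x | ustar x ≠ 0}).toReal ≤ μ.real T :=
          ENNReal.toReal_mono (measure_ne_top _ _) (measure_mono_ae hsupport)
      _ = ∫ x, χ x ∂μ := by rw [integral_congr_ae hχT, integral_indicator_one hT]
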